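/- arXiv:2012.15603 — 3 statements merged into one kernel-verified Lean document; each statement's English description precedes it below -/
import Mathlib

section
/- Let n ≥ 1, λ0 ∈ ℂ, let a_1,…,a_n be nonzero real numbers and b_1,…,b_n real numbers, and set z0 = (2λ0 − Σ_{k=1}^n b_k)/(n+1). Then D(z) = (z − z0)^{n+1} as polynomials in ℂ[z] if and only if the b_j are pairwise distinct and a_j² = −(b_j + z0)^{n+1} / ∏_{k≠j}(b_j − b_k) for every j = 1,…,n. -/
open Polynomial Finset

noncomputable def Dpoly (n : ℕ) (l0 : ℂ) (a b : Fin n → ℝ) : Polynomial ℂ :=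
  (X - C (2 * l0)) * ∏ j, (X + C (b j : ℂ))
    - ∑ j, C ((a j : ℂ) ^ 2) * ∏ k ∈ Finset.univ.erase j, (X + C (b k : ℂ))


lemma evalD (n : ℕ) (l0 : ℂ) (a b : Fin n → ℝ) (j : Fin n) :
    (Dpoly n l0 a b).eval (-(b j : ℂ)) =
      -(a j : ℂ) ^ 2 * ∏ k ∈ Finset.univ.erase j, ((b k : ℂ) - (b j : ℂ)) := by
  unfold Dpoly
  rw [eval_sub, eval_mul, eval_prod, eval_finset_sum]
  rw [Finset.prod_eq_zero (Finset.mem_univ j) (by simp)]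
  rw [Finset.sum_eq_single j]
  · rw [eval_mul, eval_prod, mul_zero, zero_sub, eval_C]
    simp only [eval_add, eval_X, eval_C]
    have : ∏ k ∈ univ.erase j, (-(b j : ℂ) + (b k : ℂ)) = ∏ k ∈ univ.erase j, ((b k : ℂ) - (b j : ℂ)) :=
      Finset.prod_congr rfl fun k _ => by ring
    rw [this]; ring
  · intro i _ hij
    rw [eval_mul, eval_prod, Finset.prod_eq_zero (Finset.mem_erase.2 ⟨hij.symm, Finset.mem_univ j⟩) (by simp), mul_zero]
  · simp

lemma degF_lt (n : ℕ) (hn : 1 ≤ n) (l0 : ℂ) (a b : Fin n → ℝ) (z0 : ℂ)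
    (hz0 : z0 = (2 * l0 - ∑ k, (b k : ℂ)) / (n + 1)) :
    (Dpoly n l0 a b - (X - C z0) ^ (n + 1)).degree < (n : WithBot ℕ) := by
  have hP : (∏ j, (X + C (b j : ℂ))).Monic := monic_prod_of_monic _ _ fun j _ => monic_X_add_C _
  have hPdeg : (∏ j, (X + C (b j : ℂ))).natDegree = n := by
    rw [natDegree_prod _ _ fun j _ => X_add_C_ne_zero _]
    simp
  have hPjdeg : ∀ j : Fin n, (∏ k ∈ univ.erase j, (X + C (b k : ℂ))).natDegree = n - 1 := by
    intro j
    rw [natDegree_prod _ _ fun k _ => X_add_C_ne_zero _]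
    simp [Finset.card_erase_of_mem]
  have hRm : ((X - C z0) ^ (n + 1)).Monic := (monic_X_sub_C z0).pow _
  have hRdeg : ((X - C z0) ^ (n + 1)).natDegree = n + 1 := by
    rw [natDegree_pow, natDegree_X_sub_C, mul_one]
  rw [degree_lt_iff_coeff_zero]
  intro m hm
  have hm' : n ≤ m := by exact_mod_cast hm
  obtain ⟨m, rfl⟩ : ∃ k, m = k + 1 := ⟨m - 1, by omega⟩
  have hDco : (Dpoly n l0 a b).coeff (m + 1) =
      (∏ j, (X + C (b j : ℂ))).coeff m
        - 2 * l0 * (∏ j, (X + C (b j : ℂ))).coeff (m + 1)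
        - ∑ j, (a j : ℂ) ^ 2 * (∏ k ∈ univ.erase j, (X + C (b k : ℂ))).coeff (m + 1) := by
    unfold Dpoly
    rw [coeff_sub, sub_mul, coeff_sub, coeff_X_mul, coeff_C_mul, finset_sum_coeff]
    exact congrArg _ (Finset.sum_congr rfl fun j _ => by rw [coeff_C_mul])
  rw [coeff_sub, hDco]
  rcases (by omega : n = m + 1 ∨ m = n ∨ n + 2 ≤ m + 1) with h | h | h
  · have h1 : (∏ j, (X + C (b j : ℂ))).coeff m = ∑ j, (b j : ℂ) := by
      have := Finset.prod_X_add_C_coeff (univ : Finset (Fin n)) (fun j => (b j : ℂ))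
        (k := m) (by simp; omega)
      rw [this]
      have hc : (#(univ : Finset (Fin n)) - m) = 1 := by simp; omega
      rw [hc, Finset.powersetCard_one, Finset.sum_map]
      simp
    have h2 : (∏ j, (X + C (b j : ℂ))).coeff (m + 1) = 1 := by
      have e : m + 1 = (∏ j, (X + C (b j : ℂ))).natDegree := by rw [hPdeg]; omega
      rw [e]; exact hP.coeff_natDegree
    have h3 : ∀ j : Fin n, (∏ k ∈ univ.erase j, (X + C (b k : ℂ))).coeff (m + 1) = 0 := by
      intro j
      apply coeff_eq_zero_of_natDegree_lt
      rw [hPjdeg j]; omega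
    have h4 : ((X - C z0) ^ (n + 1)).coeff (m + 1) = -z0 * (n + 1) := by
      rw [sub_eq_add_neg, ← C_neg, coeff_X_add_C_pow, ← h]
      norm_num [Nat.choose_succ_self_right]
    rw [h1, h2, h4]
    simp only [h3, mul_zero, Finset.sum_const_zero, sub_zero]
    have hne : ((n : ℂ) + 1) ≠ 0 := by
      exact_mod_cast (Nat.succ_ne_zero n)
    have e : -z0 * ((n : ℂ) + 1) = -(2 * l0 - ∑ k, (b k : ℂ)) := by
      rw [hz0]; field_simp
    rw [e]; ring
  · have h1 : (∏ j, (X + C (b j : ℂ))).coeff m = 1 := by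
      have e : m = (∏ j, (X + C (b j : ℂ))).natDegree := by rw [hPdeg]; omega
      rw [e]; exact hP.coeff_natDegree
    have h2 : (∏ j, (X + C (b j : ℂ))).coeff (m + 1) = 0 :=
      coeff_eq_zero_of_natDegree_lt (by rw [hPdeg]; omega)
    have h3 : ∀ j : Fin n, (∏ k ∈ univ.erase j, (X + C (b k : ℂ))).coeff (m + 1) = 0 :=
      fun j => coeff_eq_zero_of_natDegree_lt (by rw [hPjdeg j]; omega)
    have h4 : ((X - C z0) ^ (n + 1)).coeff (m + 1) = 1 := by
      have : m + 1 = ((X - C z0) ^ (n + 1)).natDegree := by rw [hRdeg]; omega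
      rw [this]; exact hRm.coeff_natDegree
    rw [h1, h2, h4]
    simp only [h3, mul_zero, Finset.sum_const_zero]
    ring
  · have h1 : (∏ j, (X + C (b j : ℂ))).coeff m = 0 :=
      coeff_eq_zero_of_natDegree_lt (by rw [hPdeg]; omega)
    have h2 : (∏ j, (X + C (b j : ℂ))).coeff (m + 1) = 0 :=
      coeff_eq_zero_of_natDegree_lt (by rw [hPdeg]; omega)
    have h3 : ∀ j : Fin n, (∏ k ∈ univ.erase j, (X + C (b k : ℂ))).coeff (m + 1) = 0 :=
      fun j => coeff_eq_zero_of_natDegree_lt (by rw [hPjdeg j]; omega)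
    have h4 : ((X - C z0) ^ (n + 1)).coeff (m + 1) = 0 :=
      coeff_eq_zero_of_natDegree_lt (by rw [hRdeg]; omega)
    rw [h1, h2, h4]
    simp only [h3, mul_zero, Finset.sum_const_zero]
    ring

lemma inj_of_eq (n : ℕ) (hn : 1 ≤ n) (l0 : ℂ) (a b : Fin n → ℝ) (ha : ∀ j, a j ≠ 0)
    (z0 : ℂ) (hD : Dpoly n l0 a b = (X - C z0) ^ (n + 1)) : Function.Injective b := by
  classical
  intro i j hij
  by_contra hne
  set β : ℂ := (b i : ℂ) with hβ
  -- z0 = -β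
  have hz : z0 = -β := by
    have h0 : (Dpoly n l0 a b).eval (-(b i : ℂ)) = 0 := by
      rw [evalD, Finset.prod_eq_zero (Finset.mem_erase.2 ⟨fun h => hne h.symm, Finset.mem_univ j⟩)
        (by rw [hij]; ring), mul_zero]
    rw [hD] at h0
    simp only [eval_pow, eval_sub, eval_X, eval_C] at h0
    have h1 := pow_eq_zero_iff (n := n + 1) (by omega) |>.1 h0
    linear_combination -h1
  set t : Finset (Fin n) := univ.filter (fun l => b l = b i) with ht
  have hit : i ∈ t := by simp [ht]
  have hjt : j ∈ t := by simp [ht, hij.symm]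
  have hm2 : 2 ≤ #t := by
    have : ({i, j} : Finset (Fin n)) ⊆ t := by
      intro x hx
      rcases Finset.mem_insert.1 hx with rfl | hx
      · exact hit
      · rwa [Finset.mem_singleton.1 hx]
    calc 2 = #({i, j} : Finset (Fin n)) := by rw [Finset.card_insert_of_notMem (by simpa), Finset.card_singleton]
    _ ≤ #t := Finset.card_le_card this
  have hmn : #t ≤ n := by simpa using Finset.card_le_card (Finset.subset_univ t)
  set m := #t with hmdef
  set Q : ℂ[X] := ∏ k ∈ tᶜ, (X + C (b k : ℂ)) with hQ
  have hbl : ∀ l ∈ t, (b l : ℂ) = β := by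
    intro l hl
    rw [ht] at hl
    rw [(Finset.mem_filter.1 hl).2]
  have hPfact : ∏ k, (X + C (b k : ℂ)) = (X + C β) ^ m * Q := by
    rw [← Finset.prod_mul_prod_compl t, Finset.prod_congr rfl (fun l hl => by rw [hbl l hl]),
      Finset.prod_const]
  have hXne : (X + C β : ℂ[X]) ≠ 0 := X_add_C_ne_zero β
  have hPl : ∀ l ∈ t, ∏ k ∈ univ.erase l, (X + C (b k : ℂ)) = (X + C β) ^ (m - 1) * Q := by
    intro l hl
    apply mul_left_cancel₀ hXne
    have h1 : (X + C (b l : ℂ)) * ∏ k ∈ univ.erase l, (X + C (b k : ℂ))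
        = ∏ k, (X + C (b k : ℂ)) := by
      exact Finset.mul_prod_erase univ (fun k : Fin n => X + C ((b k : ℂ))) (Finset.mem_univ l)
    rw [hbl l hl] at h1
    rw [h1, hPfact]
    have e : (X + C β : ℂ[X]) ^ m = (X + C β) * (X + C β) ^ (m - 1) := by
      rw [← pow_succ']
      congr 1
      omega
    rw [e, mul_assoc]
  have hPl' : ∀ l ∈ tᶜ, ∏ k ∈ univ.erase l, (X + C (b k : ℂ)) =
      (X + C β) ^ m * ∏ k ∈ tᶜ.erase l, (X + C (b k : ℂ)) := by
    intro l hl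
    apply mul_left_cancel₀ (X_add_C_ne_zero ((b l : ℂ)))
    have h1 : (X + C (b l : ℂ)) * ∏ k ∈ univ.erase l, (X + C (b k : ℂ))
        = ∏ k, (X + C (b k : ℂ)) := by
      exact Finset.mul_prod_erase univ (fun k : Fin n => X + C ((b k : ℂ))) (Finset.mem_univ l)
    have h2 : (X + C (b l : ℂ)) * ∏ k ∈ tᶜ.erase l, (X + C (b k : ℂ))
        = ∏ k ∈ tᶜ, (X + C (b k : ℂ)) := by
      exact Finset.mul_prod_erase tᶜ (fun k : Fin n => X + C ((b k : ℂ))) hl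
    rw [h1, hPfact, hQ, ← h2]
    ring
  set S : ℂ[X] := ∑ l ∈ tᶜ, C ((a l : ℂ) ^ 2) * ∏ k ∈ tᶜ.erase l, (X + C (b k : ℂ)) with hS
  set G : ℂ[X] := (X - C (2 * l0)) * (X + C β) * Q - C (∑ l ∈ t, (a l : ℂ) ^ 2) * Q
      - (X + C β) * S with hG
  have hpow : (X + C β : ℂ[X]) ^ m = (X + C β) ^ (m - 1) * (X + C β) := by
    rw [← pow_succ]
    congr 1
    omega
  have hDfact : Dpoly n l0 a b = (X + C β) ^ (m - 1) * G := by
    have e1 : ∑ l ∈ t, C ((a l : ℂ) ^ 2) * ∏ k ∈ univ.erase l, (X + C (b k : ℂ))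
        = C (∑ l ∈ t, (a l : ℂ) ^ 2) * ((X + C β) ^ (m - 1) * Q) := by
      rw [map_sum, Finset.sum_mul]
      exact Finset.sum_congr rfl fun l hl => by rw [hPl l hl]
    have e2 : ∑ l ∈ tᶜ, C ((a l : ℂ) ^ 2) * ∏ k ∈ univ.erase l, (X + C (b k : ℂ))
        = (X + C β) ^ m * S := by
      rw [hS, Finset.mul_sum]
      exact Finset.sum_congr rfl fun l hl => by rw [hPl' l hl]; ring
    unfold Dpoly
    rw [hPfact, ← Finset.sum_add_sum_compl t, e1, e2, hG, hpow]
    ring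
  have hcancel : G = (X + C β) ^ (n + 2 - m) := by
    apply mul_left_cancel₀ (pow_ne_zero (m - 1) hXne)
    rw [← hDfact, hD, hz, map_neg, sub_neg_eq_add, ← pow_add]
    congr 1
    omega
  have heval := congrArg (eval (-β)) hcancel
  simp only [hG, eval_sub, eval_mul, eval_add, eval_pow, eval_X, eval_C, neg_add_cancel,
    mul_zero, zero_mul, sub_zero, zero_sub, zero_pow (by omega : n + 2 - m ≠ 0)] at heval
  -- heval : -(∑ ...) * Q.eval (-β) = 0  (roughly)
  have hQne : Q.eval (-β) ≠ 0 := by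
    rw [hQ, eval_prod]
    apply Finset.prod_ne_zero_iff.2
    intro k hk
    simp only [eval_add, eval_X, eval_C]
    have : b k ≠ b i := by
      intro h
      exact (Finset.mem_compl.1 hk) (by simp [ht, h])
    intro hc
    apply this
    have e : (b k : ℂ) = β := by linear_combination hc
    rw [hβ] at e
    exact_mod_cast e
  have hsum : (∑ l ∈ t, (a l : ℂ) ^ 2) ≠ 0 := by
    have : (∑ l ∈ t, (a l : ℂ) ^ 2) = ((∑ l ∈ t, (a l) ^ 2 : ℝ) : ℂ) := by push_cast; ring
    rw [this]
    rw [Complex.ofReal_ne_zero]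
    have hpos : 0 < ∑ l ∈ t, (a l) ^ 2 :=
      Finset.sum_pos (fun l _ => by have := ha l; positivity) ⟨i, hit⟩
    exact ne_of_gt hpos
  rcases mul_eq_zero.1 (neg_eq_zero.1 heval) with h | h
  · exact hsum h
  · exact hQne h


lemma sign_lemma (n : ℕ) (hn : 1 ≤ n) : ((-1 : ℂ)) ^ (n - 1) = (-1 : ℂ) ^ (n + 1) := by
  rw [show n + 1 = (n - 1) + 2 by omega, pow_add]
  norm_num

lemma prod_flip (n : ℕ) (b : Fin n → ℝ) (j : Fin n) :
    ∏ k ∈ Finset.univ.erase j, ((b k : ℂ) - (b j : ℂ))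
      = (-1 : ℂ) ^ (n - 1) * ∏ k ∈ Finset.univ.erase j, ((b j : ℂ) - (b k : ℂ)) := by
  rw [Finset.prod_congr rfl (fun k _ => show ((b k : ℂ) - (b j : ℂ)) = -1 * ((b j : ℂ) - (b k : ℂ)) by ring),
    Finset.prod_mul_distrib, Finset.prod_const, Finset.card_erase_of_mem (Finset.mem_univ j),
    Finset.card_univ, Fintype.card_fin]

lemma denom_ne_zero (n : ℕ) (b : Fin n → ℝ) (hinj : Function.Injective b) (j : Fin n) :
    ∏ k ∈ Finset.univ.erase j, ((b j : ℂ) - (b k : ℂ)) ≠ 0 := by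
  apply Finset.prod_ne_zero_iff.2
  intro k hk
  apply sub_ne_zero.2
  intro h
  exact (Finset.mem_erase.1 hk).1 (hinj (by exact_mod_cast h)).symm

/-- `D(z) = (z − z0)^{n+1}` iff the `bⱼ` are pairwise distinct and
`aⱼ² = −(bⱼ + z0)^{n+1} / ∏_{k≠j}(bⱼ − bₖ)` for all `j`, where
`z0 = (2λ0 − Σ bₖ)/(n+1)`. -/
theorem stmt2 (n : ℕ) (hn : 1 ≤ n) (l0 : ℂ) (a b : Fin n → ℝ) (ha : ∀ j, a j ≠ 0)
    (z0 : ℂ) (hz0 : z0 = (2 * l0 - ∑ k, (b k : ℂ)) / (n + 1)) :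
    Dpoly n l0 a b = (X - C z0) ^ (n + 1) ↔
      (Function.Injective b ∧
        ∀ j, (a j : ℂ) ^ 2 =
          -((b j : ℂ) + z0) ^ (n + 1) /
            ∏ k ∈ Finset.univ.erase j, ((b j : ℂ) - (b k : ℂ))) := by
  constructor
  · intro hD
    have hinj : Function.Injective b := inj_of_eq n hn l0 a b ha z0 hD
    refine ⟨hinj, fun j => ?_⟩
    have heq : -(a j : ℂ) ^ 2 * ∏ k ∈ Finset.univ.erase j, ((b k : ℂ) - (b j : ℂ))
        = (-(b j : ℂ) - z0) ^ (n + 1) := by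
      rw [← evalD n l0 a b j, hD]
      simp
    rw [prod_flip n b j, sign_lemma n hn] at heq
    have hneg : (-(b j : ℂ) - z0) ^ (n + 1)
        = (-1 : ℂ) ^ (n + 1) * ((b j : ℂ) + z0) ^ (n + 1) := by
      rw [show (-(b j : ℂ) - z0) = -1 * ((b j : ℂ) + z0) by ring, mul_pow]
    rw [hneg] at heq
    rw [eq_div_iff (denom_ne_zero n b hinj j)]
    apply mul_left_cancel₀ (pow_ne_zero (n + 1) (neg_ne_zero.2 (one_ne_zero : (1 : ℂ) ≠ 0)))
    linear_combination -heq
  · rintro ⟨hinj, hform⟩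
    have hF : Dpoly n l0 a b - (X - C z0) ^ (n + 1) = 0 := by
      by_cases h0 : Dpoly n l0 a b - (X - C z0) ^ (n + 1) = 0
      · exact h0
      apply eq_zero_of_natDegree_lt_card_of_eval_eq_zero _
        (f := fun j : Fin n => -(b j : ℂ))
        (fun x y hxy => hinj (by exact_mod_cast neg_inj.1 hxy))
      · intro j
        have hkey : (a j : ℂ) ^ 2 * ∏ k ∈ Finset.univ.erase j, ((b j : ℂ) - (b k : ℂ))
            = -((b j : ℂ) + z0) ^ (n + 1) :=
          (eq_div_iff (denom_ne_zero n b hinj j)).1 (hform j)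
        rw [eval_sub, evalD n l0 a b j, prod_flip n b j, sign_lemma n hn]
        simp only [eval_pow, eval_sub, eval_X, eval_C]
        have hneg : (-(b j : ℂ) - z0) ^ (n + 1)
            = (-1 : ℂ) ^ (n + 1) * ((b j : ℂ) + z0) ^ (n + 1) := by
          rw [show (-(b j : ℂ) - z0) = -1 * ((b j : ℂ) + z0) by ring, mul_pow]
        rw [hneg]
        linear_combination -((-1 : ℂ) ^ (n + 1)) * hkey
      · have := degF_lt n hn l0 a b z0 hz0
        rw [Fintype.card_fin]
        have hd := natDegree_lt_iff_degree_lt (p := Dpoly n l0 a b - (X - C z0) ^ (n + 1))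
          (n := n) h0
        exact hd.2 (by exact_mod_cast this)
    linear_combination hF
end

section
/- Let n ≥ 1 and let λ0 ∈ ℝ. Then for every choice of nonzero real numbers a_1,…,a_n and real numbers b_1,…,b_n, the polynomial D(z) is not of the form (z − c)^{n+1} for any c ∈ ℂ; that is, D never has an (n+1)-multiple root when λ0 is real. -/
open Polynomial Finset

lemma sum_powersetCard_one {ι : Type*} (s : Finset ι) (f : ι → ℂ) :
    ∑ t ∈ s.powersetCard 1, ∏ i ∈ t, f i = ∑ i ∈ s, f i := by
  rw [Finset.powersetCard_one, Finset.sum_map]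
  simp

lemma two_mul_sum_powersetCard_two {ι : Type*} [DecidableEq ι] (s : Finset ι) (f : ι → ℂ) :
    2 * ∑ t ∈ s.powersetCard 2, ∏ i ∈ t, f i
      = (∑ i ∈ s, f i) ^ 2 - ∑ i ∈ s, f i ^ 2 := by
  induction s using Finset.induction_on with
  | empty => rw [show ((∅ : Finset ι).powersetCard 2) = ∅ by simp]; simp
  | @insert x s hx ih =>
      rw [show (2:ℕ) = Nat.succ 1 from rfl, Finset.powersetCard_succ_insert hx,
        Finset.sum_union, Finset.sum_image ?inj]
      case inj =>
        intro u hu v hv huv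
        have hau : x ∉ u := fun hxx => hx ((Finset.mem_powersetCard.1 hu).1 hxx)
        have hav : x ∉ v := fun hxx => hx ((Finset.mem_powersetCard.1 hv).1 hxx)
        have := congrArg (fun t => Finset.erase t x) huv
        simpa [Finset.erase_insert, hau, hav] using this
      · have hprod : ∀ t ∈ s.powersetCard 1, ∏ i ∈ insert x t, f i = f x * ∏ i ∈ t, f i := by
          intro t ht
          exact Finset.prod_insert (fun hxx => hx ((Finset.mem_powersetCard.1 ht).1 hxx))
        rw [Finset.sum_congr rfl hprod, ← Finset.mul_sum, sum_powersetCard_one,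
          Finset.sum_insert hx, Finset.sum_insert hx]
        rw [show Nat.succ 1 = 2 from rfl] at *
        linear_combination ih
      · rw [Finset.disjoint_left]
        intro t ht ht'
        obtain ⟨u, hu, rfl⟩ := Finset.mem_image.1 ht'
        exact hx ((Finset.mem_powersetCard.1 ht).1 (Finset.mem_insert_self x u))

lemma stmt3_key (m : ℕ) (l0 : ℝ) (a b : Fin (m+1) → ℝ) (ha : ∀ j, a j ≠ 0) (c : ℂ)
    (h : Dpoly (m+1) (l0 : ℂ) a b = (X - C c) ^ ((m+1) + 1)) : False := by
  set b' : Fin (m + 2) → ℂ := Fin.cons (-(2 * (l0:ℂ))) (fun j => (b j : ℂ)) with hb'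
  have hprod : (X - C (2 * (l0:ℂ))) * ∏ j, (X + C (b j : ℂ))
      = ∏ j : Fin (m + 2), (X + C (b' j)) := by
    conv_rhs => rw [Fin.prod_univ_succ]
    simp [hb', sub_eq_add_neg]
  rw [Dpoly, hprod, show (X - C c) = X + C (-c) by rw [map_neg, sub_eq_add_neg]] at h
  -- degrees of the P_j
  have hAmonic : ∀ j : Fin (m+1),
      (∏ k ∈ Finset.univ.erase j, (X + C (b k : ℂ))).Monic :=
    fun j => monic_prod_of_monic _ _ fun k _ => monic_X_add_C _
  have hAdeg : ∀ j : Fin (m+1),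
      (∏ k ∈ Finset.univ.erase j, (X + C (b k : ℂ))).natDegree = m := by
    intro j
    rw [Polynomial.natDegree_prod_of_monic _ _ fun k _ => monic_X_add_C _]
    simp [Finset.card_erase_of_mem]
  -- coefficient (m+1)
  have h1 := congrArg (fun p => Polynomial.coeff p (m+1)) h
  have h2 := congrArg (fun p => Polynomial.coeff p m) h
  simp only [Polynomial.coeff_sub, Polynomial.finset_sum_coeff,
    Polynomial.coeff_C_mul, Polynomial.coeff_X_add_C_pow] at h1 h2
  rw [Finset.prod_X_add_C_coeff _ _ (by simp : m + 1 ≤ #(univ : Finset (Fin (m+2))))] at h1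
  rw [Finset.prod_X_add_C_coeff _ _ (by simp : m ≤ #(univ : Finset (Fin (m+2))))] at h2
  rw [show #(univ : Finset (Fin (m+2))) - (m+1) = 1 by simp] at h1
  rw [show #(univ : Finset (Fin (m+2))) - m = 2 by simp] at h2
  rw [sum_powersetCard_one] at h1
  have hz : ∀ j : Fin (m+1),
      (∏ k ∈ Finset.univ.erase j, (X + C (b k : ℂ))).coeff (m+1) = 0 := by
    intro j
    exact Polynomial.coeff_eq_zero_of_natDegree_lt (by rw [hAdeg j]; omega)
  have ho : ∀ j : Fin (m+1),
      (∏ k ∈ Finset.univ.erase j, (X + C (b k : ℂ))).coeff m = 1 := by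
    intro j
    have := (hAmonic j).coeff_natDegree
    rwa [hAdeg j] at this
  simp only [hz, ho, mul_zero, mul_one, Finset.sum_const_zero, sub_zero] at h1 h2
  rw [show (m+1+1) - m = 2 by omega] at h2
  rw [Nat.choose_succ_self_right, show m+1+1 - (m+1) = 1 by omega, pow_one] at h1
  rw [show (m+1+1).choose m = (m+2).choose 2 by
        rw [show m = (m+2) - 2 by omega]; exact Nat.choose_symm (by omega)] at h2
  -- abbreviations
  have hsum : ∑ i, b' i = -(2*(l0:ℂ)) + ∑ j, ((b j : ℂ)) := by
    rw [Fin.sum_univ_succ]; simp [hb']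
  have hsq : ∑ i, (b' i)^2 = (2*(l0:ℂ))^2 + ∑ j, ((b j:ℂ))^2 := by
    rw [Fin.sum_univ_succ]; simp [hb']
  have hp := two_mul_sum_powersetCard_two (univ : Finset (Fin (m+2))) b'
  rw [hsum, hsq] at hp
  rw [hsum] at h1
  have hchC : (((m+2).choose 2 : ℕ) : ℂ) * 2 = ((m:ℂ)+2) * ((m:ℂ)+1) := by
    have hn : (m+2).choose 2 * 2 = (m+2) * (m+1) := by
      have h := Nat.add_one_mul_choose_eq (m+1) 1
      simpa [Nat.choose_one_right] using h.symm
    exact_mod_cast congrArg (Nat.cast : ℕ → ℂ) hn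
  push_cast at h1
  -- eq2 over ℂ
  have eq2 : ((m:ℂ)+2) * c^2 = (2*(l0:ℂ))^2 + (∑ j, ((b j:ℂ))^2) + 2 * ∑ j, ((a j:ℂ))^2 := by
    linear_combination (2:ℂ) * h2 - hp + c^2 * hchC
      - ((-(2*(l0:ℂ)) + ∑ j, ((b j : ℂ))) - c * ((m:ℂ)+2)) * h1
  -- c is real
  set SB : ℝ := ∑ j, b j with hSB
  set γ : ℝ := (2*l0 - SB)/(m+2) with hγdef
  have hm2 : ((m:ℝ)+2) ≠ 0 := by positivity
  have hγ : c = (γ : ℂ) := by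
    have hcast : ((SB:ℝ) : ℂ) = ∑ j, ((b j : ℂ)) := by push_cast [hSB]; ring
    rw [hγdef]
    push_cast
    rw [eq_div_iff (by exact_mod_cast hm2)]
    rw [← hcast] at h1
    linear_combination h1
  rw [hγ] at eq2
  have eq2R : ((m:ℝ)+2) * γ^2 = (2*l0)^2 + (∑ j, (b j)^2) + 2 * ∑ j, (a j)^2 := by
    exact_mod_cast eq2
  have eq1R : ((m:ℝ)+2) * γ = 2*l0 - SB := by
    rw [hγdef]; field_simp
  -- Cauchy–Schwarz
  set x : Fin (m+2) → ℝ := Fin.cons (2*l0) (fun j => -(b j)) with hx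
  have hcs := sq_sum_le_card_mul_sum_sq (s := (univ : Finset (Fin (m+2)))) (f := x)
  have hxs : ∑ i, x i = 2*l0 - SB := by
    rw [Fin.sum_univ_succ]; simp [hx, hSB, sub_eq_add_neg]
  have hxsq : ∑ i, (x i)^2 = (2*l0)^2 + ∑ j, (b j)^2 := by
    rw [Fin.sum_univ_succ]; simp [hx]
  rw [hxs, hxsq] at hcs
  simp only [Finset.card_univ, Fintype.card_fin] at hcs
  have hA : (0:ℝ) < ∑ j, (a j)^2 :=
    Finset.sum_pos (fun j _ => pow_two_pos_of_ne_zero (ha j)) ⟨0, Finset.mem_univ 0⟩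
  have hcm : ((m+2 : ℕ) : ℝ) = (m:ℝ) + 2 := by push_cast; ring
  rw [hcm] at hcs
  have e3 : (2*l0 - SB)^2 = ((m:ℝ)+2)^2 * γ^2 := by rw [← eq1R]; ring
  have e5 : ((m:ℝ)+2) * ((2*l0)^2 + ∑ j, (b j)^2)
      = ((m:ℝ)+2)^2*γ^2 - 2*(((m:ℝ)+2) * ∑ j, (a j)^2) := by
    linear_combination (-((m:ℝ)+2)) * eq2R
  rw [e3, e5] at hcs
  have hMA : 0 < ((m:ℝ)+2) * (∑ j, (a j)^2) := mul_pos (by positivity) hA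
  linarith


/-- if `λ0` is real then, for every choice of nonzero real `aⱼ` and real
`bⱼ`, the polynomial `D` is never of the form `(z − c)^{n+1}`: it has no
`(n+1)`-multiple root. -/
theorem stmt3 (n : ℕ) (hn : 1 ≤ n) (l0 : ℝ) :
    ∀ (a b : Fin n → ℝ), (∀ j, a j ≠ 0) →
      ∀ c : ℂ, Dpoly n (l0 : ℂ) a b ≠ (X - C c) ^ (n + 1) := by
  obtain ⟨m, rfl⟩ : ∃ m, n = m + 1 := ⟨n - 1, by omega⟩
  intro a b ha c h
  exact stmt3_key m l0 a b ha c h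
end

section
/- For every integer n ≥ 1, with ω_j = jπ/(n+1), the following two-sided estimate holds: (2/π)·ln(n/2) ≤ (1/(n+1))·Σ_{j=1}^n 1/sin(ω_j) ≤ 1 + ln((n+1)/2). In particular, the maximal average amplitude 1 + (n+1)√n / Σ_{j=1}^n (1/sin ω_j) is of order O(√n / ln n) as n → ∞. -/
/-!
Each term `csc ω_j` equals `csc(m π/(n+1))` with `m = min j (n+1-j)`, and `m π/(n+1) ≤ π/2`,
so Jordan's inequality `2x/π ≤ sin x ≤ x` on `[0, π/2]` pins it between `(n+1)/(π m)` and
`(n+1)/(2 m)`. Summing, the weights `1/m` add up to `H_⌈n/2⌉ + H_⌊n/2⌋`, and the harmonic numbers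
satisfy `log k ≤ H_⌊k⌋ ≤ 1 + log k`. The asymptotic claim follows from the lower bound, since
`log (n/2) ≥ (log n)/2` for `n ≥ 4` and `log n ≤ 2 √n`.
-/

open Finset Filter Asymptotics

/-- The sum `Σ_{j=1}^n csc(jπ/(n+1))`. -/
noncomputable def cscSum (n : ℕ) : ℝ :=
  ∑ j : Fin n, 1 / Real.sin (((j : ℕ) + 1) * Real.pi / (n + 1))

open Real

namespace Real

lemma one_div_le_one_div_sin {x : ℝ} (hx₀ : 0 < x) (hxπ : x < π) : 1 / x ≤ 1 / sin x :=
  one_div_le_one_div_of_le (sin_pos_of_pos_of_lt_pi hx₀ hxπ) (sin_le hx₀.le)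

lemma one_div_sin_le {x : ℝ} (hx₀ : 0 < x) (hx : x ≤ π / 2) : 1 / sin x ≤ π / (2 * x) := by
  have h : 2 / π * x ≤ sin x := mul_le_sin hx₀.le hx
  calc 1 / sin x ≤ 1 / (2 / π * x) := one_div_le_one_div_of_le (by positivity) h
    _ = π / (2 * x) := by field_simp

lemma log_le_two_mul_sqrt {x : ℝ} (hx : 0 ≤ x) : log x ≤ 2 * √x := by
  simpa [sqrt_eq_rpow, div_eq_mul_inv, mul_comm] using log_le_rpow_div hx (ε := 1 / 2) (by norm_num)

lemma log_le_two_mul_log_div_two {x : ℝ} (hx : 4 ≤ x) : log x ≤ 2 * log (x / 2) := by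
  have h4 : log 4 = 2 * log 2 := by
    rw [show (4 : ℝ) = 2 ^ 2 by norm_num, log_pow, Nat.cast_ofNat]
  have : log 4 ≤ log x := log_le_log (by norm_num) hx
  rw [log_div (by linarith) two_ne_zero]
  linarith

end Real

lemma sin_mul_pi_div_eq_sin_min {N j : ℕ} (hj : j ≤ N) :
    sin (j * π / N) = sin ((min j (N - j) : ℕ) * π / N) := by
  rcases le_total j (N - j) with h | h
  · rw [min_eq_left h]
  · rcases Nat.eq_zero_or_pos N with rfl | hN
    · simp
    rw [min_eq_right h, Nat.cast_sub hj, ← sin_pi_sub]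
    congr 1
    field_simp

lemma min_mul_pi_div_le_pi_div_two (N j : ℕ) : (min j (N - j) : ℕ) * π / N ≤ π / 2 := by
  rcases N.eq_zero_or_pos with rfl | hN
  · rw [Nat.cast_zero, div_zero]
    positivity
  have h : 2 * ((min j (N - j) : ℕ) : ℝ) ≤ N := by exact_mod_cast (by omega : 2 * min j (N - j) ≤ N)
  rw [div_le_div_iff₀ (by positivity) two_pos]
  nlinarith [pi_pos]

lemma le_one_div_sin_mul_pi_div {N j : ℕ} (hj₀ : 0 < j) (hjN : j < N) :
    N / π * ((min j (N - j) : ℕ) : ℝ)⁻¹ ≤ 1 / sin (j * π / N) := by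
  rw [sin_mul_pi_div_eq_sin_min hjN.le]
  have hm : 0 < min j (N - j) := by omega
  have hN : 0 < N := by omega
  calc N / π * ((min j (N - j) : ℕ) : ℝ)⁻¹ = 1 / ((min j (N - j) : ℕ) * π / N) := by
        field_simp
    _ ≤ _ := one_div_le_one_div_sin (by positivity)
        ((min_mul_pi_div_le_pi_div_two N j).trans_lt (half_lt_self pi_pos))

lemma one_div_sin_mul_pi_div_le {N j : ℕ} (hj₀ : 0 < j) (hjN : j < N) :
    1 / sin (j * π / N) ≤ N / 2 * ((min j (N - j) : ℕ) : ℝ)⁻¹ := by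
  rw [sin_mul_pi_div_eq_sin_min hjN.le]
  have hm : 0 < min j (N - j) := by omega
  have hN : 0 < N := by omega
  calc 1 / sin ((min j (N - j) : ℕ) * π / N) ≤ π / (2 * ((min j (N - j) : ℕ) * π / N)) :=
        one_div_sin_le (by positivity) (min_mul_pi_div_le_pi_div_two N j)
    _ = N / 2 * ((min j (N - j) : ℕ) : ℝ)⁻¹ := by
        field_simp

lemma harmonic_mono : Monotone harmonic :=
  monotone_nat_of_le_succ fun n => by rw [harmonic_succ]; exact le_add_of_nonneg_right (by positivity)

noncomputable def foldedHarmonic (n : ℕ) : ℝ :=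
  ∑ j ∈ Icc 1 n, ((min j (n + 1 - j) : ℕ) : ℝ)⁻¹

lemma foldedHarmonic_eq (n : ℕ) :
    foldedHarmonic n = harmonic ((n + 1) / 2) + harmonic (n / 2) := by
  have hsplit := sum_Ioc_consecutive (fun j => ((min j (n + 1 - j) : ℕ) : ℝ)⁻¹)
    (Nat.zero_le ((n + 1) / 2)) (by omega : (n + 1) / 2 ≤ n)
  rw [foldedHarmonic, show Icc 1 n = Ioc 0 n from Icc_add_one_left_eq_Ioc 0 n, ← hsplit]
  simp only [harmonic_eq_sum_Icc, Rat.cast_sum, Rat.cast_inv, Rat.cast_natCast]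
  congr 1
  · refine sum_congr rfl fun j hj => ?_
    rw [mem_Icc] at hj
    rw [min_eq_left (by omega)]
  · refine sum_nbij' (fun j => n + 1 - j) (fun i => n + 1 - i) ?_ ?_ ?_ ?_ ?_ <;>
      intro j hj <;> simp only [mem_Ioc, mem_Icc] at hj ⊢
    · omega
    · omega
    · omega
    · omega
    · rw [min_eq_right (by omega)]

lemma two_mul_log_div_two_le_foldedHarmonic (n : ℕ) :
    2 * log (n / 2) ≤ foldedHarmonic n := by
  have hlog : log (n / 2) ≤ harmonic (n / 2) := by
    simpa only [Nat.floor_div_ofNat, Nat.floor_natCast]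
      using log_le_harmonic_floor ((n : ℝ) / 2) (by positivity)
  have hmono : (harmonic (n / 2) : ℝ) ≤ harmonic ((n + 1) / 2) :=
    Rat.cast_le.mpr (harmonic_mono (by omega))
  rw [foldedHarmonic_eq]
  linarith

lemma foldedHarmonic_le {n : ℕ} (hn : 1 ≤ n) :
    foldedHarmonic n ≤ 2 * (1 + log ((n + 1) / 2)) := by
  have hfloor : ⌊((n : ℝ) + 1) / 2⌋₊ = (n + 1) / 2 := by
    rw [Nat.floor_div_ofNat, Nat.floor_add_one (by positivity), Nat.floor_natCast]
  have hlog : (harmonic ((n + 1) / 2) : ℝ) ≤ 1 + log ((n + 1) / 2) := by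
    rw [← hfloor]
    refine harmonic_floor_le_one_add_log _ ?_
    have : (1 : ℝ) ≤ n := by exact_mod_cast hn
    linarith
  have hmono : (harmonic (n / 2) : ℝ) ≤ harmonic ((n + 1) / 2) :=
    Rat.cast_le.mpr (harmonic_mono (by omega))
  rw [foldedHarmonic_eq]
  linarith

lemma cscSum_eq_sum_Icc (n : ℕ) :
    cscSum n = ∑ j ∈ Icc 1 n, 1 / sin (j * π / (n + 1 : ℕ)) := by
  rw [cscSum, Fin.sum_univ_eq_sum_range (fun j : ℕ => 1 / sin ((j + 1) * π / (n + 1))),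
    ← Ico_add_one_right_eq_Icc, sum_Ico_eq_sum_range, add_tsub_cancel_right]
  refine sum_congr rfl fun j _ => ?_
  push_cast
  ring_nf

lemma le_cscSum (n : ℕ) : (n + 1) / π * foldedHarmonic n ≤ cscSum n := by
  rw [cscSum_eq_sum_Icc, foldedHarmonic, mul_sum]
  refine sum_le_sum fun j hj => ?_
  rw [mem_Icc] at hj
  exact_mod_cast le_one_div_sin_mul_pi_div (N := n + 1) (by omega) (by omega)

lemma cscSum_le (n : ℕ) : cscSum n ≤ (n + 1) / 2 * foldedHarmonic n := by
  rw [cscSum_eq_sum_Icc, foldedHarmonic, mul_sum]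
  refine sum_le_sum fun j hj => ?_
  rw [mem_Icc] at hj
  exact_mod_cast one_div_sin_mul_pi_div_le (N := n + 1) (by omega) (by omega)

lemma two_div_pi_mul_log_le (n : ℕ) :
    2 / π * log (n / 2) ≤ 1 / (n + 1) * cscSum n := by
  have hpi := pi_pos
  calc 2 / π * log (n / 2) = 1 / (n + 1) * ((n + 1) / π * (2 * log (n / 2))) := by
        field_simp
    _ ≤ 1 / (n + 1) * ((n + 1) / π * foldedHarmonic n) := by
        gcongr
        exact two_mul_log_div_two_le_foldedHarmonic n
    _ ≤ 1 / (n + 1) * cscSum n := by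
        gcongr
        exact le_cscSum n

lemma one_div_mul_cscSum_le {n : ℕ} (hn : 1 ≤ n) :
    1 / (n + 1) * cscSum n ≤ 1 + log ((n + 1) / 2) := by
  calc 1 / (n + 1) * cscSum n ≤ 1 / (n + 1) * ((n + 1) / 2 * foldedHarmonic n) := by
        gcongr
        exact cscSum_le n
    _ ≤ 1 / (n + 1) * ((n + 1) / 2 * (2 * (1 + log ((n + 1) / 2)))) := by
        gcongr
        exact foldedHarmonic_le hn
    _ = 1 + log ((n + 1) / 2) := by
        field_simp

lemma mul_log_div_pi_le_cscSum {n : ℕ} (hn : 4 ≤ n) : (n + 1) * log n / π ≤ cscSum n := by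
  have hlog : log n ≤ 2 * log (n / 2) := log_le_two_mul_log_div_two (by exact_mod_cast hn)
  calc (n + 1) * log n / π ≤ (n + 1) / π * (2 * log (n / 2)) := by
        rw [mul_div_right_comm]
        gcongr
    _ ≤ (n + 1) / π * foldedHarmonic n := by
        gcongr
        exact two_mul_log_div_two_le_foldedHarmonic n
    _ ≤ cscSum n := le_cscSum n

lemma one_isBigO_sqrt_div_log : (fun _ : ℕ => (1 : ℝ)) =O[atTop] fun n : ℕ => √n / log n := by
  refine IsBigO.of_bound 2 ?_
  filter_upwards [eventually_ge_atTop 2] with n hn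
  have hlog : 0 < log n := log_pos (by exact_mod_cast hn)
  rw [norm_one, norm_of_nonneg (by positivity), mul_div_assoc', le_div_iff₀ hlog, one_mul]
  exact log_le_two_mul_sqrt n.cast_nonneg

lemma mul_sqrt_div_cscSum_isBigO :
    (fun n : ℕ => (n + 1) * √n / cscSum n) =O[atTop] fun n : ℕ => √n / log n := by
  refine IsBigO.of_bound π ?_
  filter_upwards [eventually_ge_atTop 4] with n hn
  have hlog : 0 < log n := log_pos (by exact_mod_cast (by omega : 1 < n))
  have hsum := mul_log_div_pi_le_cscSum hn
  have hpi := pi_pos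
  rw [norm_of_nonneg (div_nonneg (by positivity) ((by positivity : (0 : ℝ) ≤ _).trans hsum)),
    norm_of_nonneg (by positivity)]
  calc (n + 1) * √n / cscSum n ≤ (n + 1) * √n / ((n + 1) * log n / π) := by
        gcongr
    _ = π * (√n / log n) := by
        field_simp

/-- for every `n ≥ 1`,
`(2/π)·ln(n/2) ≤ (1/(n+1))·Σ_{j=1}^n csc(jπ/(n+1)) ≤ 1 + ln((n+1)/2)`;
in particular the maximal average amplitude `1 + (n+1)√n/Σ_{j=1}^n csc(ω_j)` is
`O(√n/ln n)` as `n → ∞`. -/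
theorem stmt17 :
    (∀ n : ℕ, 1 ≤ n →
      (2 / Real.pi) * Real.log ((n : ℝ) / 2) ≤ (1 / ((n : ℝ) + 1)) * cscSum n ∧
      (1 / ((n : ℝ) + 1)) * cscSum n ≤ 1 + Real.log (((n : ℝ) + 1) / 2)) ∧
    (fun n : ℕ => 1 + ((n : ℝ) + 1) * Real.sqrt n / cscSum n) =O[atTop]
      (fun n : ℕ => Real.sqrt n / Real.log n) :=
  ⟨fun n hn => ⟨two_div_pi_mul_log_le n, one_div_mul_cscSum_le hn⟩,
    one_isBigO_sqrt_div_log.add mul_sqrt_div_cscSum_isBigO⟩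
end
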